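/- arXiv:2410.20143 — 3 statements merged into one kernel-verified Lean document; each statement's English description precedes it below -/
import Mathlib

section
/- The MPB rule satisfies weak exhaustiveness: for every PB instance I = (N, P, c, b, (A_i)), every S ∈ MPB(I), and every project p ∈ P∖S, if c(S) + c(p) ≤ b then S ∪ {p} ∈ MPB(I). -/
variable {N P : Type*}

/-- Total cost of a set of projects. -/
def costOf (c : P → ℕ) (S : Finset P) : ℕ := ∑ p ∈ S, c p

/-- The minimum utility of a voter, where the utility of voter `i` from `S` is the
total cost of the approved projects of `i` in `S`. -/
def minUtil [Fintype N] [Nonempty N] [DecidableEq P] (c : P → ℕ) (A : N → Finset P)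
    (S : Finset P) : ℕ :=
  Finset.univ.inf' Finset.univ_nonempty fun i : N => costOf c (A i ∩ S)

/-- `S` is selected by the Maxmin Participatory Budgeting (MPB) rule: it is feasible and
maximizes the minimum utility among all feasible sets. -/
def MPB [Fintype N] [Nonempty N] [Fintype P] [DecidableEq P] (c : P → ℕ) (b : ℕ)
    (A : N → Finset P) (S : Finset P) : Prop :=
  costOf c S ≤ b ∧
    ∀ T : Finset P, costOf c T ≤ b → minUtil c A T ≤ minUtil c A S

theorem costOf_mono (c : P → ℕ) {S T : Finset P} (h : S ⊆ T) : costOf c S ≤ costOf c T :=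
  Finset.sum_le_sum_of_subset h

theorem costOf_insert_le [DecidableEq P] (c : P → ℕ) (S : Finset P) (p : P) :
    costOf c (insert p S) ≤ costOf c S + c p := by
  by_cases hp : p ∈ S
  · rw [Finset.insert_eq_of_mem hp]
    exact Nat.le_add_right _ _
  · rw [costOf, costOf, Finset.sum_insert hp, add_comm]

theorem minUtil_mono [Fintype N] [Nonempty N] [DecidableEq P] (c : P → ℕ) (A : N → Finset P)
    {S T : Finset P} (h : S ⊆ T) : minUtil c A S ≤ minUtil c A T :=
  Finset.le_inf' _ _ fun i _ =>
    (Finset.inf'_le _ (Finset.mem_univ i)).trans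
      (costOf_mono c (Finset.inter_subset_inter_left h))

theorem MPB.of_subset [Fintype N] [Nonempty N] [Fintype P] [DecidableEq P] {c : P → ℕ} {b : ℕ}
    {A : N → Finset P} {S T : Finset P} (hS : MPB c b A S) (hST : S ⊆ T)
    (hT : costOf c T ≤ b) : MPB c b A T :=
  ⟨hT, fun U hU => (hS.2 U hU).trans (minUtil_mono c A hST)⟩

theorem stmt_5_general [Fintype N] [Nonempty N] [Fintype P] [DecidableEq P]
    (c : P → ℕ) (b : ℕ) (A : N → Finset P)
    (S : Finset P) (hS : MPB c b A S)
    (p : P) (hfit : costOf c S + c p ≤ b) :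
    MPB c b A (insert p S) :=
  hS.of_subset (Finset.subset_insert p S) ((costOf_insert_le c S p).trans hfit)

/-- Weak exhaustiveness of MPB: if `S` is MPB-selected, `p ∉ S` and `S ∪ {p}` still fits
within the budget, then `S ∪ {p}` is also MPB-selected. -/
theorem stmt_5 [Fintype N] [Nonempty N] [Fintype P] [DecidableEq P]
    (c : P → ℕ) (hc : ∀ p, 0 < c p) (b : ℕ) (A : N → Finset P)
    (S : Finset P) (hS : MPB c b A S)
    (p : P) (hp : p ∉ S) (hfit : costOf c S + c p ≤ b) :
    MPB c b A (insert p S) :=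
  stmt_5_general c b A S hS p hfit
end

section
/- The MPB rule satisfies maximal coverage: for every PB instance I = (N, P, c, b, (A_i)), every S ∈ MPB(I), every project p ∈ S such that {j ∈ N : p ∈ A_j} ⊆ {j ∈ N : (S∖{p}) ∩ A_j ≠ ∅} (i.e., p is redundant in S), and every voter i ∈ N: if W(I) ∩ A_i = ∅ then c(a) > b − c(S∖{p}) for every project a ∈ A_i. -/
/-!
If a voter `i` approves no winning project, then every MPB outcome gives `i` utility zero, so
the optimal minimum utility is zero and every feasible set is an MPB outcome. A project `a`
approved by `i` with `c a ≤ b` would then win as the singleton `{a}`; hence `c a > b`.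
-/

variable {N P : Type*}

def wins [Fintype N] [Nonempty N] [Fintype P] [DecidableEq P] (c : P → ℕ) (b : ℕ)
    (A : N → Finset P) (p : P) : Prop :=
  ∃ S : Finset P, MPB c b A S ∧ p ∈ S

@[simp]
theorem costOf_singleton (c : P → ℕ) (a : P) : costOf c {a} = c a :=
  Finset.sum_singleton c a

section

variable [Fintype N] [Nonempty N] [DecidableEq P] {c : P → ℕ} {A : N → Finset P}

theorem minUtil_le_costOf_inter (i : N) (S : Finset P) :
    minUtil c A S ≤ costOf c (A i ∩ S) :=
  Finset.inf'_le _ (Finset.mem_univ i)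

theorem minUtil_eq_zero_of_disjoint {i : N} {S : Finset P} (h : Disjoint (A i) S) :
    minUtil c A S = 0 := by
  simpa [Finset.disjoint_iff_inter_eq_empty.mp h, costOf] using
    minUtil_le_costOf_inter (c := c) (A := A) i S

variable [Fintype P] {b : ℕ}

theorem MPB.of_minUtil_le {S T : Finset P} (hS : MPB c b A S) (hT : costOf c T ≤ b)
    (hle : minUtil c A S ≤ minUtil c A T) : MPB c b A T :=
  ⟨hT, fun U hU => (hS.2 U hU).trans hle⟩

theorem MPB.disjoint_of_forall_not_wins {S : Finset P} (hS : MPB c b A S) {i : N}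
    (hi : ∀ q ∈ A i, ¬ wins c b A q) : Disjoint (A i) S :=
  Finset.disjoint_left.mpr fun q hq hqS => hi q hq ⟨S, hS, hqS⟩

theorem MPB.budget_lt_of_forall_not_wins {S : Finset P} (hS : MPB c b A S) {i : N}
    (hi : ∀ q ∈ A i, ¬ wins c b A q) {a : P} (ha : a ∈ A i) : b < c a := by
  by_contra! hab
  have hzero : minUtil c A S = 0 :=
    minUtil_eq_zero_of_disjoint (hS.disjoint_of_forall_not_wins hi)
  have hsingleton : MPB c b A {a} :=
    hS.of_minUtil_le (by simpa using hab) (hzero ▸ Nat.zero_le _)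
  exact hi a ha ⟨{a}, hsingleton, Finset.mem_singleton_self a⟩

end

theorem stmt_9_general [Fintype N] [Nonempty N] [Fintype P] [DecidableEq P]
    (c : P → ℕ) (b : ℕ) (A : N → Finset P)
    (S : Finset P) (hS : MPB c b A S)
    (p : P)
    (i : N) (hi : ∀ q ∈ A i, ¬ wins c b A q) :
    ∀ a ∈ A i, b < costOf c (S \ {p}) + c a := by
  intro a ha
  exact (hS.budget_lt_of_forall_not_wins hi ha).trans_le (Nat.le_add_left _ _)

/-- Maximal coverage of the MPB rule: for every MPB-selected set `S`, every redundant
project `p ∈ S` (removing `p` does not change the set of covered voters), and every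
voter `i` none of whose approved projects wins, every project `a` approved by `i`
satisfies `c a > b − c(S∖{p})`. -/
theorem stmt_9 [Fintype N] [Nonempty N] [Fintype P] [DecidableEq P]
    (c : P → ℕ) (hc : ∀ p, 0 < c p) (b : ℕ) (A : N → Finset P)
    (S : Finset P) (hS : MPB c b A S)
    (p : P) (hp : p ∈ S)
    (hred : ∀ j : N, p ∈ A j → ((S \ {p}) ∩ A j).Nonempty)
    (i : N) (hi : ∀ q ∈ A i, ¬ wins c b A q) :
    ∀ a ∈ A i, b < costOf c (S \ {p}) + c a :=
  stmt_9_general c b A S hS p i hi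
end

section
/- Neither the cost-utility rule R_c nor the cost-capped-utility rule R_ĉ is range-abiding or range-unanimous. Precisely, for each of the two rules there exists a PB instance with multiple degrees of sophistication (one can take a single project with permissible costs {0, ⌊(b−1)/n⌋, b} where b ≥ n+1, all n voters with lower bound ⌊(b−1)/n⌋, one voter with upper bound b and the rest with upper bound ⌊(b−1)/n⌋) in which: (a) the rule selects an allocation x with τ_j ≠ ∅ and x_j > τ̄_j for some project j, so range-abidingness fails; and (b) Σ_j τ̄_j ≤ b yet the allocation (τ̄_1, …, τ̄_m) is not selected by the rule, so range-unanimity fails. -/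
/-- A valid budget allocation: each project gets one of its permissible costs, and the
total allocated amount is within the budget. -/
def validAlloc {m : ℕ} (C : Fin m → Finset ℕ) (b : ℕ) (x : Fin m → ℕ) : Prop :=
  (∀ j, x j ∈ C j) ∧ ∑ j, x j ≤ b

/-- Cost utility of voter `i` at allocation `x`. -/
def costUtil {N : Type*} {m : ℕ} (lo hi : N → Fin m → ℕ) (i : N) (x : Fin m → ℕ) : ℕ :=
  ∑ j ∈ Finset.univ.filter (fun j : Fin m => lo i j ≤ x j ∧ x j ≤ hi i j), x j

/-- Cost-capped utility of voter `i` at allocation `x`. -/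
def capUtil {N : Type*} {m : ℕ} (lo hi : N → Fin m → ℕ) (i : N) (x : Fin m → ℕ) : ℕ :=
  ∑ j, (if x j < lo i j then 0 else if x j ≤ hi i j then x j else hi i j)

/-- The rule `R_c` selects exactly the valid allocations maximizing total cost utility. -/
def selectedCost {N : Type*} [Fintype N] {m : ℕ} (C : Fin m → Finset ℕ) (b : ℕ)
    (lo hi : N → Fin m → ℕ) (x : Fin m → ℕ) : Prop :=
  validAlloc C b x ∧ ∀ y : Fin m → ℕ, validAlloc C b y →
    ∑ i : N, costUtil lo hi i y ≤ ∑ i : N, costUtil lo hi i x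

/-- The rule `R_ĉ` selects exactly the valid allocations maximizing total cost-capped
utility. -/
def selectedCap {N : Type*} [Fintype N] {m : ℕ} (C : Fin m → Finset ℕ) (b : ℕ)
    (lo hi : N → Fin m → ℕ) (x : Fin m → ℕ) : Prop :=
  validAlloc C b x ∧ ∀ y : Fin m → ℕ, validAlloc C b y →
    ∑ i : N, capUtil lo hi i y ≤ ∑ i : N, capUtil lo hi i x

/-- The set `τ_j` of unanimously approved costs of project `j`. -/
def unanimousCosts {N : Type*} [Fintype N] {m : ℕ} (C : Fin m → Finset ℕ)
    (lo hi : N → Fin m → ℕ) (j : Fin m) : Finset ℕ :=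
  (C j).filter fun v => ∀ i : N, lo i j ≤ v ∧ v ≤ hi i j

/-!
Take one project with costs `{0, k, b}`, where `(n + 1) k < b`, and `n + 1` voters who all have
lower bound `k`; voter `0` has upper bound `b`, the others upper bound `k`. Then `τ = {k}`. Funding
`b` gives total cost utility `b` and total capped utility `b + n k`, while funding `k` gives only
`(n + 1) k` under both utilities, so both rules fund `b > τ̄` and reject the affordable `τ̄ = k`.
-/

open Finset

def NotRangeAbiding {N : Type*} [Fintype N] {m : ℕ} (C : Fin m → Finset ℕ)
    (lo hi : N → Fin m → ℕ) (R : (Fin m → ℕ) → Prop) : Prop :=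
  ∃ x, R x ∧ ∃ (j : Fin m) (hne : (unanimousCosts C lo hi j).Nonempty),
    (unanimousCosts C lo hi j).max' hne < x j

def NotRangeUnanimous {N : Type*} [Fintype N] {m : ℕ} (C : Fin m → Finset ℕ) (b : ℕ)
    (lo hi : N → Fin m → ℕ) (R : (Fin m → ℕ) → Prop) : Prop :=
  ∃ hne : ∀ j, (unanimousCosts C lo hi j).Nonempty,
    (∑ j, (unanimousCosts C lo hi j).max' (hne j)) ≤ b ∧
    ¬ R fun j => (unanimousCosts C lo hi j).max' (hne j)

theorem mem_unanimousCosts {N : Type*} [Fintype N] {m : ℕ} {C : Fin m → Finset ℕ}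
    {lo hi : N → Fin m → ℕ} {j : Fin m} {v : ℕ} :
    v ∈ unanimousCosts C lo hi j ↔ v ∈ C j ∧ ∀ i, lo i j ≤ v ∧ v ≤ hi i j :=
  mem_filter

section SingleProject

variable {N : Type*} (lo hi : N → Fin 1 → ℕ)

theorem validAlloc_fin_one_iff (C : Fin 1 → Finset ℕ) (b : ℕ) (y : Fin 1 → ℕ) :
    validAlloc C b y ↔ y 0 ∈ C 0 ∧ y 0 ≤ b := by
  simp [validAlloc, Fin.forall_fin_one]

theorem costUtil_fin_one (i : N) (y : Fin 1 → ℕ) :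
    costUtil lo hi i y = if lo i 0 ≤ y 0 ∧ y 0 ≤ hi i 0 then y 0 else 0 := by
  simp [costUtil, sum_filter]

theorem capUtil_fin_one (i : N) (y : Fin 1 → ℕ) :
    capUtil lo hi i y = if y 0 < lo i 0 then 0 else min (y 0) (hi i 0) := by
  simp only [capUtil, Fin.sum_univ_one]
  split_ifs <;> omega

end SingleProject

namespace OneDissenter

variable (n b : ℕ)

/-- The paper's `⌊(b - 1) / n⌋`, for `n + 1` voters. -/
def k : ℕ := (b - 1) / (n + 1)

def C : Fin 1 → Finset ℕ := fun _ => {0, k n b, b}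

def lo : Fin (n + 1) → Fin 1 → ℕ := fun _ _ => k n b

def hi : Fin (n + 1) → Fin 1 → ℕ := fun i _ => if i = 0 then b else k n b

theorem k_le : k n b ≤ b := (Nat.div_le_self _ _).trans (Nat.sub_le _ _)

theorem wellFormed :
    (∀ j, 0 ∈ C n b j) ∧ (∀ i j, lo n b i j ∈ C n b j) ∧ (∀ i j, hi n b i j ∈ C n b j) ∧
      (∀ i j, lo n b i j ≤ hi n b i j) := by
  refine ⟨fun _ => by simp [C], fun _ _ => by simp [C, lo], fun i _ => ?_, fun i _ => ?_⟩ <;>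
    by_cases h : i = 0 <;> simp [C, lo, hi, h, k_le]

variable {n b}

theorem succ_mul_k_lt (hb : 1 ≤ b) : (n + 1) * k n b < b := by
  have := Nat.mul_div_le (b - 1) (n + 1)
  rw [k]
  omega

theorem k_lt (hb : 1 ≤ b) : k n b < b :=
  lt_of_le_of_lt (Nat.le_mul_of_pos_left _ n.succ_pos) (succ_mul_k_lt hb)

theorem unanimousCosts_eq (hn : 1 ≤ n) (j : Fin 1) :
    unanimousCosts (C n b) (lo n b) (hi n b) j = {k n b} := by
  ext v
  have hlast : Fin.last n ≠ 0 := by simp [Fin.ext_iff]; omega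
  rw [mem_unanimousCosts, mem_singleton]
  constructor
  · rintro ⟨-, hv⟩
    have := hv (Fin.last n)
    simp only [lo, hi, hlast, if_false] at this
    omega
  · rintro rfl
    refine ⟨by simp [C], fun i => ⟨le_rfl, ?_⟩⟩
    by_cases hi0 : i = 0 <;> simp [hi, hi0, k_le]

theorem sum_costUtil (y : Fin 1 → ℕ) :
    ∑ i, costUtil (lo n b) (hi n b) i y =
      (if k n b ≤ y 0 ∧ y 0 ≤ b then y 0 else 0) + n * if k n b = y 0 then y 0 else 0 := by
  simp only [costUtil_fin_one, Fin.sum_univ_succ, lo, hi, Fin.succ_ne_zero, if_true, if_false,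
    sum_const, card_univ, Fintype.card_fin, smul_eq_mul, ← le_antisymm_iff]

theorem sum_capUtil (y : Fin 1 → ℕ) :
    ∑ i, capUtil (lo n b) (hi n b) i y =
      (if y 0 < k n b then 0 else min (y 0) b) +
        n * if y 0 < k n b then 0 else min (y 0) (k n b) := by
  simp only [capUtil_fin_one, Fin.sum_univ_succ, lo, hi, Fin.succ_ne_zero, if_true, if_false,
    sum_const, card_univ, Fintype.card_fin, smul_eq_mul]

theorem validAlloc_budget : validAlloc (C n b) b fun _ => b :=
  (validAlloc_fin_one_iff _ _ _).2 ⟨by simp [C], le_rfl⟩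

theorem sum_costUtil_budget (hb : 1 ≤ b) :
    ∑ i, costUtil (lo n b) (hi n b) i (fun _ => b) = b := by
  simp [sum_costUtil, k_le, (k_lt hb).ne]

theorem sum_costUtil_k :
    ∑ i, costUtil (lo n b) (hi n b) i (fun _ => k n b) = (n + 1) * k n b := by
  simp only [sum_costUtil, le_refl, k_le, and_self, if_true]
  ring

theorem sum_costUtil_le (hb : 1 ≤ b) {y : Fin 1 → ℕ} (hy : y 0 ≤ b) :
    ∑ i, costUtil (lo n b) (hi n b) i y ≤ b := by
  rw [sum_costUtil]
  by_cases hk : k n b = y 0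
  · simp only [← hk, le_rfl, k_le, and_self, if_true]
    linarith [succ_mul_k_lt (n := n) hb]
  · simp only [hk, if_false, mul_zero, add_zero]
    split_ifs <;> omega

theorem sum_capUtil_budget :
    ∑ i, capUtil (lo n b) (hi n b) i (fun _ => b) = b + n * k n b := by
  simp [sum_capUtil, not_lt.2 (k_le n b), min_eq_right (k_le n b)]

theorem sum_capUtil_k :
    ∑ i, capUtil (lo n b) (hi n b) i (fun _ => k n b) = (n + 1) * k n b := by
  simp only [sum_capUtil, lt_self_iff_false, if_false, min_eq_left (k_le n b), min_self]
  ring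

theorem sum_capUtil_le (y : Fin 1 → ℕ) : ∑ i, capUtil (lo n b) (hi n b) i y ≤ b + n * k n b := by
  rw [sum_capUtil]
  split_ifs
  · simp
  · exact add_le_add (min_le_right _ _) (Nat.mul_le_mul_left _ (min_le_right _ _))

theorem selectedCost_budget (hb : 1 ≤ b) :
    selectedCost (C n b) b (lo n b) (hi n b) fun _ => b := by
  refine ⟨validAlloc_budget, fun y hy => ?_⟩
  rw [sum_costUtil_budget hb]
  exact sum_costUtil_le hb ((validAlloc_fin_one_iff _ _ _).1 hy).2

theorem not_selectedCost_k (hb : 1 ≤ b) :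
    ¬ selectedCost (C n b) b (lo n b) (hi n b) fun _ => k n b := by
  rintro ⟨-, hmax⟩
  have := hmax _ validAlloc_budget
  rw [sum_costUtil_budget hb, sum_costUtil_k] at this
  exact (succ_mul_k_lt hb).not_ge this

theorem selectedCap_budget : selectedCap (C n b) b (lo n b) (hi n b) fun _ => b :=
  ⟨validAlloc_budget, fun y _ => sum_capUtil_budget.symm ▸ sum_capUtil_le y⟩

theorem not_selectedCap_k (hb : 1 ≤ b) :
    ¬ selectedCap (C n b) b (lo n b) (hi n b) fun _ => k n b := by
  rintro ⟨-, hmax⟩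
  have := hmax _ validAlloc_budget
  rw [sum_capUtil_budget, sum_capUtil_k, add_mul, one_mul, add_comm] at this
  exact (k_lt hb).not_ge (Nat.le_of_add_le_add_left this)

variable {R : (Fin 1 → ℕ) → Prop}

theorem notRangeAbiding (hn : 1 ≤ n) (hb : 1 ≤ b) (hR : R fun _ => b) :
    NotRangeAbiding (C n b) (lo n b) (hi n b) R :=
  ⟨_, hR, 0, by simp [unanimousCosts_eq hn], by simpa [unanimousCosts_eq hn] using k_lt hb⟩

theorem notRangeUnanimous (hn : 1 ≤ n) (hR : ¬ R fun _ => k n b) :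
    NotRangeUnanimous (C n b) b (lo n b) (hi n b) R :=
  ⟨fun _ => by simp [unanimousCosts_eq hn], by simpa [unanimousCosts_eq hn] using k_le n b,
    by simpa [unanimousCosts_eq hn] using hR⟩

end OneDissenter

/-- Neither the cost-utility rule `R_c` nor the cost-capped-utility rule `R_ĉ` is
range-abiding or range-unanimous: for each rule there is an instance where (a) the rule
selects an allocation exceeding the maximum unanimously approved cost of some project,
and (b) the allocation of maximal unanimously approved costs fits in the budget but is
not selected. -/
theorem stmt_12 :
    (∃ (n m : ℕ) (C : Fin m → Finset ℕ) (b : ℕ)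
      (lo hi : Fin (n + 1) → Fin m → ℕ),
      (∀ j, 0 ∈ C j) ∧ (∀ i j, lo i j ∈ C j) ∧ (∀ i j, hi i j ∈ C j) ∧
      (∀ i j, lo i j ≤ hi i j) ∧
      (∃ x : Fin m → ℕ, selectedCost C b lo hi x ∧
        ∃ (j : Fin m) (hne : (unanimousCosts C lo hi j).Nonempty),
          (unanimousCosts C lo hi j).max' hne < x j) ∧
      (∃ hne : ∀ j, (unanimousCosts C lo hi j).Nonempty,
        (∑ j, (unanimousCosts C lo hi j).max' (hne j)) ≤ b ∧
        ¬ selectedCost C b lo hi fun j => (unanimousCosts C lo hi j).max' (hne j))) ∧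
    (∃ (n m : ℕ) (C : Fin m → Finset ℕ) (b : ℕ)
      (lo hi : Fin (n + 1) → Fin m → ℕ),
      (∀ j, 0 ∈ C j) ∧ (∀ i j, lo i j ∈ C j) ∧ (∀ i j, hi i j ∈ C j) ∧
      (∀ i j, lo i j ≤ hi i j) ∧
      (∃ x : Fin m → ℕ, selectedCap C b lo hi x ∧
        ∃ (j : Fin m) (hne : (unanimousCosts C lo hi j).Nonempty),
          (unanimousCosts C lo hi j).max' hne < x j) ∧
      (∃ hne : ∀ j, (unanimousCosts C lo hi j).Nonempty,
        (∑ j, (unanimousCosts C lo hi j).max' (hne j)) ≤ b ∧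
        ¬ selectedCap C b lo hi fun j => (unanimousCosts C lo hi j).max' (hne j))) := by
  obtain ⟨h0, hlo, hhi, hle⟩ := OneDissenter.wellFormed 1 3
  open OneDissenter in
  exact ⟨⟨1, 1, _, 3, _, _, h0, hlo, hhi, hle,
      notRangeAbiding le_rfl (by norm_num) (selectedCost_budget (by norm_num)),
      notRangeUnanimous le_rfl (not_selectedCost_k (by norm_num))⟩,
    ⟨1, 1, _, 3, _, _, h0, hlo, hhi, hle,
      notRangeAbiding le_rfl (by norm_num) (selectedCap_budget),
      notRangeUnanimous le_rfl (not_selectedCap_k (by norm_num))⟩⟩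
end
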